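/- For positive integers T and R, λ^{m+n}(E_{T,R}) = Σ_k q^{⌈(R−k)a₁⌉+⋯+⌈(R−k)a_m⌉−m} · (q^{⌊k·a_{m+1}⌋+⋯+⌊k·a_{m+n}⌋} − q^{⌈k·a_{m+1}⌉+⋯+⌈k·a_{m+n}⌉−n}), where the sum runs over all rational numbers k with 0 ≤ k ≤ T; a term is nonzero only if k = l/a_{m+j} for some nonnegative integer l and some 1 ≤ j ≤ n, so the sum is finite. -/

import Mathlib

set_option linter.unusedSectionVars false
set_option synthInstance.maxHeartbeats 1000000
set_option maxHeartbeats 1000000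
set_option linter.unusedTactic false

open MeasureTheory Matrix Filter Topology

noncomputable section

namespace PaperKL

variable (Fq : Type) [Field Fq] [Fintype Fq]

/-- The local field `K = 𝔽_q((t⁻¹))`, realized as the field of formal Laurent series
in the variable `X = t⁻¹` over `𝔽_q`. -/
abbrev KK (Fq : Type) [Field Fq] : Type := LaurentSeries Fq

/-- The element `t` (the inverse of the Laurent-series variable `X = t⁻¹`). -/
def tElem : KK Fq := HahnSeries.single (-1 : ℤ) 1

/-- The ring `Z = 𝔽_q[t]` of polynomials in `t`, as a subalgebra of `K`. -/
def Zring : Subalgebra Fq (KK Fq) := Algebra.adjoin Fq {tElem Fq}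

/-- The ring `𝒪 = 𝔽_q[[t⁻¹]]` of formal power series in `t⁻¹`, as a subset of `K`. -/
def Oring : Set (KK Fq) := {f | ∀ i : ℤ, i < 0 → f.coeff i = 0}

/-- The absolute value `|f| = q^{deg f}` on `K` (`deg` of a Laurent series in `t⁻¹`
is minus its order in `X = t⁻¹`). -/
def absK (f : KK Fq) : ℝ :=
  @ite _ (f = 0) (Classical.dec _) 0 ((Fintype.card Fq : ℝ) ^ (-f.order))

/-- Supremum norm on `K^d`. -/
def normInf {d : ℕ} (x : Fin d → KK Fq) : ℝ := ⨆ i, absK Fq (x i)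

/-- Supremum norm on matrices over `K`. -/
def normInfMat {m n : ℕ} (A : Fin m → Fin n → KK Fq) : ℝ := ⨆ i, ⨆ j, absK Fq (A i j)

/-- Weighted quasi-norm `‖x‖ = max_i |x_i|^{1/w i}`. -/
def normWt {k : ℕ} (w : Fin k → ℕ) (x : Fin k → KK Fq) : ℝ :=
  ⨆ i, (absK Fq (x i)) ^ ((w i : ℝ)⁻¹)

/-- The weighted quasi-norm `‖·‖_α` on `K^m` given by the first `m` weights. -/
def normAlpha {m n : ℕ} (a : Fin (m + n) → ℕ) (x : Fin m → KK Fq) : ℝ :=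
  normWt Fq (fun i => a (Fin.castAdd n i)) x

/-- The weighted quasi-norm `‖·‖_β` on `K^n` given by the last `n` weights. -/
def normBeta {m n : ℕ} (a : Fin (m + n) → ℕ) (y : Fin n → KK Fq) : ℝ :=
  normWt Fq (fun j => a (Fin.natAdd m j)) y

/-- `G = SL(d, K)`. -/
abbrev G (d : ℕ) : Type := Matrix.SpecialLinearGroup (Fin d) (KK Fq)

/-- `Γ = SL(d, Z)`, the subgroup of `G` of matrices with entries in `Z = 𝔽_q[t]`. -/
def Gamma (d : ℕ) : Subgroup (G Fq d) :=
  (Matrix.SpecialLinearGroup.map (n := Fin d) (Zring Fq).toSubring.subtype).range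

instance (d : ℕ) : TopologicalSpace (G Fq d) :=
  TopologicalSpace.induced (fun g => (g : Matrix (Fin d) (Fin d) (KK Fq))) inferInstance

instance : MeasurableSpace (KK Fq) := borel _

instance : BorelSpace (KK Fq) := ⟨rfl⟩

instance (d : ℕ) : MeasurableSpace (G Fq d) := borel _

/-- The homogeneous space `X = G/Γ`. -/
abbrev XSpace (d : ℕ) : Type := G Fq d ⧸ Gamma Fq d

lemma prod_zpow_eq {ι : Type*} (x : KK Fq) (hx : x ≠ 0) (s : Finset ι) (f : ι → ℤ) :
    ∏ i ∈ s, x ^ f i = x ^ ∑ i ∈ s, f i := by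
  classical
  induction s using Finset.induction with
  | empty => simp
  | insert _ _ h ih => rw [Finset.prod_insert h, Finset.sum_insert h, ih, zpow_add₀ hx]

lemma tElem_ne_zero : tElem Fq ≠ 0 := HahnSeries.single_ne_zero one_ne_zero

/-- The weight vector of the diagonal element `g_a`. -/
def wtVec (m n : ℕ) (a : Fin (m + n) → ℕ) : Fin (m + n) → ℤ :=
  Fin.addCases (fun i => (a (Fin.castAdd n i) : ℤ)) (fun j => -(a (Fin.natAdd m j) : ℤ))

/-- The diagonal element `g_a = diag(t^{a₁},…,t^{a_m},t^{−a_{m+1}},…,t^{−a_{m+n}}) ∈ SL(d,K)`. -/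
def ga {m n : ℕ} (a : Fin (m + n) → ℕ)
    (hsum : ∑ i : Fin m, a (Fin.castAdd n i) = ∑ j : Fin n, a (Fin.natAdd m j)) :
    G Fq (m + n) :=
  ⟨Matrix.diagonal (fun i => tElem Fq ^ wtVec m n a i), by
    rw [Matrix.det_diagonal, prod_zpow_eq Fq _ (tElem_ne_zero Fq)]
    have : ∑ i : Fin (m + n), wtVec m n a i = 0 := by
      rw [Fin.sum_univ_add]
      simp only [wtVec, Fin.addCases_left, Fin.addCases_right]
      rw [Finset.sum_neg_distrib]
      push_cast
      rw [← Nat.cast_sum, ← Nat.cast_sum, hsum]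
      ring
    rw [this, zpow_zero]⟩

/-- The unipotent element `u_A = [[I, A], [0, I]] ∈ SL(m+n, K)`. -/
def uA {m n : ℕ} (A : Fin m → Fin n → KK Fq) : G Fq (m + n) :=
  ⟨(Matrix.fromBlocks 1 (Matrix.of A) 0 1).submatrix finSumFinEquiv.symm finSumFinEquiv.symm, by
    rw [Matrix.det_submatrix_equiv_self, Matrix.det_fromBlocks_zero₂₁]; simp⟩

/-- `min a = min_i a_i`. -/
def minWt {k : ℕ} (a : Fin k → ℕ) : ℕ := ⨅ i, a i

/-- The product measure `λ^{mn}` on `Mat_{m×n}(K)`. -/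
def lamMat (m n : ℕ) (lam : Measure (KK Fq)) : Measure (Fin m → Fin n → KK Fq) :=
  Measure.pi fun _ => Measure.pi fun _ => lam

/-- The product measure `λ^d` on `K^d`. -/
def lamVec (d : ℕ) (lam : Measure (KK Fq)) : Measure (Fin d → KK Fq) :=
  Measure.pi fun _ => lam

/-- `C_c^∞(X)`: compactly supported functions on `X = G/Γ` whose lift to `G` is smooth,
i.e. right-invariant under some compact open subgroup of `G`. -/
def IsSmoothCc (d : ℕ) (φ : XSpace Fq d → ℝ) : Prop :=
  HasCompactSupport φ ∧
    ∃ U : Subgroup (G Fq d), IsOpen (U : Set (G Fq d)) ∧ IsCompact (U : Set (G Fq d)) ∧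
      ∀ g u : G Fq d, u ∈ U → φ (QuotientGroup.mk (g * u)) = φ (QuotientGroup.mk g)

/-- `C_c^∞(H)`, in the coordinates `H ≃ Mat_{m×n}(K)`: compactly supported smooth
(locally constant) functions. -/
def IsSmoothCcH (m n : ℕ) (f : (Fin m → Fin n → KK Fq) → ℝ) : Prop :=
  HasCompactSupport f ∧
    ∃ U : AddSubgroup (Fin m → Fin n → KK Fq),
      IsOpen (U : Set (Fin m → Fin n → KK Fq)) ∧
      IsCompact (U : Set (Fin m → Fin n → KK Fq)) ∧
      ∀ A B, B ∈ U → f (A + B) = f A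

/-- The lattice `g·Z^d ⊆ K^d` attached to `g`. -/
def latticeOf {d : ℕ} (g : Matrix (Fin d) (Fin d) (KK Fq)) : Set (Fin d → KK Fq) :=
  {v | ∃ w : Fin d → KK Fq, (∀ i, w i ∈ Zring Fq) ∧ v = g.mulVec w}

/-- `δ(g·Z^d)`: the length of the shortest nonzero vector of the lattice `g·Z^d`. -/
def deltaOf {d : ℕ} (g : Matrix (Fin d) (Fin d) (KK Fq)) : ℝ :=
  sInf {c | ∃ v ∈ latticeOf Fq g, v ≠ 0 ∧ c = normInf Fq v}

/-- `‖w₁ ∧ ⋯ ∧ w_r‖_∞`: the supremum norm of the coordinates of the wedge of `r` vectors in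
the standard basis of `⋀^r K^d`, i.e. the sup of the absolute values of the `r×r` minors. -/
def wedgeNorm {d r : ℕ} (w : Fin r → Fin d → KK Fq) : ℝ :=
  ⨆ I : {s : Finset (Fin d) // s.card = r},
    absK Fq (Matrix.det (Matrix.of fun i j : Fin r => w j ((I.1.orderIsoOfFin I.2 i : Fin d))))

/-- `α(g·Z^d)`: the supremum of `vol(KΔ/Δ)⁻¹` over `Z`-submodules `Δ` of the lattice `g·Z^d`,
where the covolume of a rank-`r` submodule with `Z`-basis `w₁,…,w_r` is `‖w₁ ∧ ⋯ ∧ w_r‖_∞`. -/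
def alphaOf {d : ℕ} (g : Matrix (Fin d) (Fin d) (KK Fq)) : ℝ :=
  sSup {c | ∃ r : ℕ, r ≤ d ∧ ∃ w : Fin r → Fin d → KK Fq,
    (∀ j, w j ∈ latticeOf Fq g) ∧ LinearIndependent (KK Fq) w ∧ c = (wedgeNorm Fq w)⁻¹}

/-- The congruence subgroup `K^{(l)} = (Id + t^{-l} Mat(d,𝒪)) ∩ SL(d,𝒪)` (for `l = 0`
this is `K₀ = SL(d,𝒪)`), as a subset of `G`. -/
def congSet (d l : ℕ) : Set (G Fq d) :=
  {g | ∀ i j : Fin d, ∀ s : ℤ, s < l →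
    ((g : Matrix (Fin d) (Fin d) (KK Fq)) i j
      - (1 : Matrix (Fin d) (Fin d) (KK Fq)) i j).coeff s = 0}

/-- The averaging operator `Av_l` over `K^{(l)}`, where `η l` is the probability Haar
measure on `K^{(l)}`. -/
def avgX {d : ℕ} (η : ℕ → Measure (G Fq d)) (l : ℕ) (φ : XSpace Fq d → ℝ) :
    XSpace Fq d → ℝ := fun x => ∫ k, φ (k • x) ∂(η l)

/-- The level-`l` projection `pr[l]`. -/
def prX {d : ℕ} (η : ℕ → Measure (G Fq d)) : ℕ → (XSpace Fq d → ℝ) → XSpace Fq d → ℝ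
  | 0 => fun φ => avgX Fq η 0 φ
  | (l + 1) => fun φ => avgX Fq η (l + 1) φ - avgX Fq η l φ

/-- The degree-`k` Sobolev norm `S_k(φ)` on `X`: `S_k(φ)² = Σ_{l≥0} q^{lk}‖pr[l]φ‖₂²`. -/
def sobolevX {d : ℕ} (η : ℕ → Measure (G Fq d)) (mu : Measure (XSpace Fq d)) (k : ℕ)
    (φ : XSpace Fq d → ℝ) : ℝ :=
  Real.sqrt (∑' l : ℕ, (Fintype.card Fq : ℝ) ^ (l * k) * ∫ x, (prX Fq η l φ x) ^ 2 ∂mu)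

/-- The family `η` is the family of probability Haar measures on the congruence
subgroups `K^{(l)}` of `G`. -/
def IsHaarFamily (d : ℕ) (η : ℕ → Measure (G Fq d)) : Prop :=
  ∀ l : ℕ, IsProbabilityMeasure (η l) ∧ η l (congSet Fq d l)ᶜ = 0 ∧
    ∀ k ∈ congSet Fq d l, Measure.map (fun g => k * g) (η l) = η l

/-- `K^{(l)} ∩ H` in the coordinates of `H`: matrices with entries in `t^{-l}𝒪`. -/
def congSetH (m n : ℕ) (l : ℕ) : Set (Fin m → Fin n → KK Fq) :=
  {A | ∀ i j, ∀ s : ℤ, s < l → (A i j).coeff s = 0}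

/-- The probability Haar measure on `K^{(l)} ∩ H`: the normalized restriction of `λ^{mn}`. -/
def haarCongH (m n : ℕ) (lam : Measure (KK Fq)) (l : ℕ) : Measure (Fin m → Fin n → KK Fq) :=
  (lamMat Fq m n lam (congSetH Fq m n l))⁻¹ • (lamMat Fq m n lam).restrict (congSetH Fq m n l)

/-- The averaging operator `Av_l` over `K^{(l)} ∩ H` on functions on `H`. -/
def avgH {m n : ℕ} (lam : Measure (KK Fq)) (l : ℕ) (f : (Fin m → Fin n → KK Fq) → ℝ) :
    (Fin m → Fin n → KK Fq) → ℝ := fun A => ∫ B, f (A + B) ∂(haarCongH Fq m n lam l)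

/-- The level-`l` projection `pr[l]` on functions on `H`. -/
def prH {m n : ℕ} (lam : Measure (KK Fq)) :
    ℕ → ((Fin m → Fin n → KK Fq) → ℝ) → (Fin m → Fin n → KK Fq) → ℝ
  | 0 => fun f => avgH Fq lam 0 f
  | (l + 1) => fun f => avgH Fq lam (l + 1) f - avgH Fq lam l f

/-- The degree-`k` Sobolev norm on `C_c^∞(H)`. -/
def sobolevH {m n : ℕ} (lam : Measure (KK Fq)) (k : ℕ)
    (f : (Fin m → Fin n → KK Fq) → ℝ) : ℝ :=
  Real.sqrt (∑' l : ℕ, (Fintype.card Fq : ℝ) ^ (l * k) *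
    ∫ A, (prH Fq lam l f A) ^ 2 ∂(lamMat Fq m n lam))

/-- Splitting of a vector of `K^{m+n}` into its first `m` and last `n` coordinates. -/
def vSplit {m n : ℕ} (v : Fin (m + n) → KK Fq) : (Fin m → KK Fq) × (Fin n → KK Fq) :=
  (fun i => v (Fin.castAdd n i), fun j => v (Fin.natAdd m j))

/-- `π_α(x) ∈ C`: some point of the weighted dilation orbit
`{(t^{k a₁}x₁,…,t^{k a_m}x_m) : k ∈ ℤ}` of `x` lies in `C` (`C` a subset of the unit
sphere `S^{m-1}`). -/
def dirMemA {m n : ℕ} (a : Fin (m + n) → ℕ) (C : Set (Fin m → KK Fq))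
    (x : Fin m → KK Fq) : Prop :=
  ∃ k : ℤ, (fun i => tElem Fq ^ (k * (a (Fin.castAdd n i) : ℤ)) * x i) ∈ C

/-- `π_β(y) ∈ C` for the weights `a_{m+1},…,a_{m+n}`. -/
def dirMemB {m n : ℕ} (a : Fin (m + n) → ℕ) (C : Set (Fin n → KK Fq))
    (y : Fin n → KK Fq) : Prop :=
  ∃ k : ℤ, (fun j => tElem Fq ^ (k * (a (Fin.natAdd m j) : ℤ)) * y j) ∈ C

/-- The set `E_{T,R} = {(x,y) : ‖x‖_α < q^R/‖y‖_β, 1 ≤ ‖y‖_β ≤ q^T}`. -/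
def ESet {m n : ℕ} (a : Fin (m + n) → ℕ) (T R : ℝ) :
    Set ((Fin m → KK Fq) × (Fin n → KK Fq)) :=
  {p | normAlpha Fq a p.1 < (Fintype.card Fq : ℝ) ^ R / normBeta Fq a p.2 ∧
       1 ≤ normBeta Fq a p.2 ∧ normBeta Fq a p.2 ≤ (Fintype.card Fq : ℝ) ^ T}

/-- The set `F_{S,R} = {(x,y) : ‖x‖_α < q^R/‖y‖_β, 1 ≤ ‖x‖_α ≤ q^S}`. -/
def FSet {m n : ℕ} (a : Fin (m + n) → ℕ) (S R : ℝ) :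
    Set ((Fin m → KK Fq) × (Fin n → KK Fq)) :=
  {p | normAlpha Fq a p.1 < (Fintype.card Fq : ℝ) ^ R / normBeta Fq a p.2 ∧
       1 ≤ normAlpha Fq a p.1 ∧ normAlpha Fq a p.1 ≤ (Fintype.card Fq : ℝ) ^ S}

/-- The set `E_{T,R}(C₁,C₂)`: points of `E_{T,R}` with directions in `C₁`, `C₂`. -/
def ESetDir {m n : ℕ} (a : Fin (m + n) → ℕ) (T R : ℝ)
    (C₁ : Set (Fin m → KK Fq)) (C₂ : Set (Fin n → KK Fq)) :
    Set ((Fin m → KK Fq) × (Fin n → KK Fq)) :=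
  {p | p ∈ ESet Fq a T R ∧ dirMemA Fq a C₁ p.1 ∧ dirMemB Fq a C₂ p.2}

/-- `N_R(T,A)`: the number of nonzero `(p,q) ∈ Z^m × Z^n` with
`‖Aq − p‖_α < q^R/‖q‖_β` and `1 ≤ ‖q‖_β ≤ q^T`. -/
def countSol {m n : ℕ} (a : Fin (m + n) → ℕ) (T R : ℝ) (A : Fin m → Fin n → KK Fq) : ℕ :=
  Nat.card {pq : (Fin m → KK Fq) × (Fin n → KK Fq) //
    pq ≠ 0 ∧ (∀ i, pq.1 i ∈ Zring Fq) ∧ (∀ j, pq.2 j ∈ Zring Fq) ∧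
    ((Matrix.of A).mulVec pq.2 - pq.1, pq.2) ∈ ESet Fq a T R}

/-- `N_R(T,A)(C₁,C₂)`: as `countSol`, with the direction constraints
`π_α(Aq−p) ∈ C₁`, `π_β(q) ∈ C₂`. -/
def countSolDir {m n : ℕ} (a : Fin (m + n) → ℕ) (T R : ℝ)
    (C₁ : Set (Fin m → KK Fq)) (C₂ : Set (Fin n → KK Fq)) (A : Fin m → Fin n → KK Fq) : ℕ :=
  Nat.card {pq : (Fin m → KK Fq) × (Fin n → KK Fq) //
    pq ≠ 0 ∧ (∀ i, pq.1 i ∈ Zring Fq) ∧ (∀ j, pq.2 j ∈ Zring Fq) ∧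
    ((Matrix.of A).mulVec pq.2 - pq.1, pq.2) ∈ ESetDir Fq a T R C₁ C₂}

/-- The Siegel transform `f̂(Λ) = Σ_{v ∈ Λ∖{0}} f(v)` of the characteristic function of a
set `S ⊆ K^d`, evaluated at the lattice `g·Z^d`. -/
def siegel {d : ℕ} (S : Set (Fin d → KK Fq)) (g : Matrix (Fin d) (Fin d) (KK Fq)) : ℕ :=
  Nat.card {v : Fin d → KK Fq // v ∈ latticeOf Fq g ∧ v ≠ 0 ∧ v ∈ S}

/-- The ball of radius `ρ` centered at the origin in `(K^d, ‖·‖_∞)`. -/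
def ballVec (d : ℕ) (ρ : ℝ) : Set (Fin d → KK Fq) := {v | normInf Fq v < ρ}

/-- The ball of radius `ρ` centered at `0` in `(Mat_{m×n}(K), ‖·‖_∞)`
(equivalently, the ball centered at the identity in `H`). -/
def ballMat (m n : ℕ) (ρ : ℝ) : Set (Fin m → Fin n → KK Fq) := {A | normInfMat Fq A < ρ}

/-- The ball of radius `ρ` centered at the identity in `G`, for the metric induced by the
supremum norm on matrix entries. -/
def ballG (d : ℕ) (ρ : ℝ) : Set (G Fq d) :=
  {g | normInfMat Fq (fun i j => (g : Matrix (Fin d) (Fin d) (KK Fq)) i j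
        - (1 : Matrix (Fin d) (Fin d) (KK Fq)) i j) < ρ}

end PaperKL

namespace PaperKL

/-!
The absolute value on `K` takes values in `q^ℤ`, so `‖y‖_β` only takes values `q^k` with
`k` rational, and `E_{T,R}` is the disjoint union over rational `k ∈ [0, T]` of the
products `{‖x‖_α < q^{R-k}} × {‖y‖_β = q^k}`. Both factors are boxes of balls of `K`:
`‖x‖_α < q^c` iff `|x_i| ≤ q^{⌈c a_i⌉ - 1}` for all `i`, and `‖y‖_β ≤ q^k` iff
`|y_j| ≤ q^{⌊k a_{m+j}⌋}` for all `j` (similarly with `<`), so the sphere `‖y‖_β = q^k`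
is a difference of two such boxes. The ball `{|f| ≤ q^s}` has measure `q^s`: it is the
disjoint union of `q` translates of the ball of radius `q^{s-1}`, and the unit ball `𝒪`
has measure `1`.
-/

open Set
open scoped ENNReal NNReal

section DegreeBall

variable {Fq : Type} [Field Fq]

/-- The closed ball `{f : |f| ≤ q^s}`; coefficients are indexed by powers of `X = t⁻¹`. -/
def degLE (s : ℤ) : Set (KK Fq) := {f | ∀ i : ℤ, i < -s → f.coeff i = 0}

lemma degLE_zero : (degLE 0 : Set (KK Fq)) = Oring Fq := by
  ext f
  simp [degLE, Oring]

lemma mem_degLE_iff_valuation_le {s : ℤ} {f : KK Fq} :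
    f ∈ degLE s ↔ Valued.v f ≤ WithZero.exp s := by
  rw [← neg_neg s, LaurentSeries.valuation_le_iff_coeff_lt_eq_zero, neg_neg]
  rfl

lemma isOpen_degLE (s : ℤ) : IsOpen (degLE s : Set (KK Fq)) := by
  set e : KK Fq := HahnSeries.single (-s) 1
  have he : Valued.v e = WithZero.exp s := by
    simp [e, LaurentSeries.valuation_single_zpow]
  convert Valued.isOpen_closedBall (KK Fq) (r := Valued.v.restrict e) (by simp [e]) using 1
  ext f
  simp [Valuation.restrict_le_iff, mem_degLE_iff_valuation_le, he]

lemma measurableSet_degLE (s : ℤ) : MeasurableSet (degLE s : Set (KK Fq)) :=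
  (isOpen_degLE s).measurableSet

lemma zero_mem_degLE (s : ℤ) : (0 : KK Fq) ∈ degLE s := fun _ _ => HahnSeries.coeff_zero

lemma mem_degLE_iff_neg_order_le {f : KK Fq} (hf : f ≠ 0) {s : ℤ} :
    f ∈ degLE s ↔ -f.order ≤ s := by
  refine ⟨fun h => ?_, fun h i hi => HahnSeries.coeff_eq_zero_of_lt_order (by omega)⟩
  by_contra! hlt
  exact hf (HahnSeries.coeff_order_eq_zero.mp (h _ (by omega)))

lemma neg_single_add_mem_degLE_iff {s : ℤ} {c : Fq} {g : KK Fq} :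
    -HahnSeries.single (-(s + 1)) c + g ∈ degLE s ↔
      g ∈ degLE (s + 1) ∧ g.coeff (-(s + 1)) = c := by
  constructor
  · intro h
    refine ⟨fun i hi => ?_, ?_⟩
    · have := h i (by omega)
      rwa [HahnSeries.coeff_add, HahnSeries.coeff_neg, HahnSeries.coeff_single_of_ne (by omega),
        neg_zero, zero_add] at this
    · have := h (-(s + 1)) (by omega)
      rw [HahnSeries.coeff_add, HahnSeries.coeff_neg, HahnSeries.coeff_single_same] at this
      linear_combination this
  · rintro ⟨h, rfl⟩ i hi
    rw [HahnSeries.coeff_add, HahnSeries.coeff_neg]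
    rcases eq_or_ne i (-(s + 1)) with rfl | hne
    · rw [HahnSeries.coeff_single_same, neg_add_cancel]
    · rw [HahnSeries.coeff_single_of_ne hne, h i (by omega), neg_zero, zero_add]

end DegreeBall

lemma prod_zpow_eq_zpow_sum {ι G₀ : Type*} [CommGroupWithZero G₀] (s : Finset ι) {a : G₀}
    (ha : a ≠ 0) (f : ι → ℤ) : ∏ i ∈ s, a ^ f i = a ^ ∑ i ∈ s, f i := by
  classical
  induction s using Finset.induction with
  | empty => simp
  | insert _ _ h ih => rw [Finset.prod_insert h, Finset.sum_insert h, ih, zpow_add₀ ha]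

section HaarMeasure

variable {Fq : Type} [Field Fq] [Fintype Fq] (lam : Measure (KK Fq)) [lam.IsAddLeftInvariant]

lemma measure_degLE_add_one (s : ℤ) :
    lam (degLE (s + 1)) = Fintype.card Fq * lam (degLE s) := by
  have hcover : degLE (s + 1) =
      ⋃ c : Fq, (fun g => -HahnSeries.single (-(s + 1)) c + g) ⁻¹' degLE s := by
    ext g
    simp only [mem_iUnion, mem_preimage, neg_single_add_mem_degLE_iff]
    exact ⟨fun h => ⟨_, h, rfl⟩, fun ⟨_, h, _⟩ => h⟩
  have hdisj : Pairwise (Function.onFun Disjoint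
      fun c : Fq =>
        (fun g => -HahnSeries.single (-(s + 1)) c + g) ⁻¹' (degLE s : Set (KK Fq))) :=
    fun c c' hne => disjoint_left.mpr fun g hg hg' => hne <|
      (neg_single_add_mem_degLE_iff.mp hg).2.symm.trans (neg_single_add_mem_degLE_iff.mp hg').2
  rw [hcover, measure_iUnion hdisj fun c =>
    (measurableSet_degLE s).preimage (measurable_const_add _)]
  simp [measure_preimage_add]

lemma measure_degLE (hlam : lam (Oring Fq) = 1) (s : ℤ) :
    lam (degLE s) = ((Fintype.card Fq : ℝ≥0) ^ s : ℝ≥0) := by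
  have hq0 : (Fintype.card Fq : ℝ≥0) ≠ 0 := Nat.cast_ne_zero.mpr Fintype.card_ne_zero
  have hq : (Fintype.card Fq : ℝ≥0∞) = (Fintype.card Fq : ℝ≥0) := rfl
  induction s using Int.induction_on with
  | zero => simp [degLE_zero, hlam]
  | succ k ih =>
    rw [measure_degLE_add_one, ih, zpow_add_one₀ hq0, ENNReal.coe_mul, mul_comm, hq]
  | pred k ih =>
    have h := measure_degLE_add_one lam (-(k : ℤ) - 1)
    have hpow : (Fintype.card Fq : ℝ≥0) ^ (-(k : ℤ)) =
        (Fintype.card Fq : ℝ≥0) ^ (-(k : ℤ) - 1) * Fintype.card Fq := by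
      rw [← zpow_add_one₀ hq0, sub_add_cancel]
    rw [sub_add_cancel, ih, hpow, ENNReal.coe_mul, mul_comm, hq] at h
    exact ((ENNReal.mul_right_inj (by simp) ENNReal.coe_ne_top).mp h).symm

variable [SigmaFinite lam]

lemma measure_pi_degLE (hlam : lam (Oring Fq) = 1) {ι : Type*} [Fintype ι] (e : ι → ℤ) :
    Measure.pi (fun _ : ι => lam) (univ.pi fun i => degLE (e i))
      = ((Fintype.card Fq : ℝ≥0) ^ ∑ i, e i : ℝ≥0) := by
  rw [Measure.pi_pi]
  simp_rw [measure_degLE lam hlam]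
  rw [← ENNReal.ofNNReal_finsetProd,
    prod_zpow_eq_zpow_sum _ (Nat.cast_ne_zero.mpr Fintype.card_ne_zero)]

end HaarMeasure

section WeightedNorm

variable {Fq : Type} [Field Fq] [Fintype Fq]

lemma one_lt_card_real : (1 : ℝ) < Fintype.card Fq := Nat.one_lt_cast.mpr Fintype.one_lt_card

lemma absK_eq_zpow {f : KK Fq} (hf : f ≠ 0) : absK Fq f = (Fintype.card Fq : ℝ) ^ (-f.order) :=
  if_neg hf

lemma absK_zero : absK Fq (0 : KK Fq) = 0 := if_pos rfl

lemma absK_rpow_le_iff {f : KK Fq} {w : ℕ} (hw : 0 < w) (c : ℝ) :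
    absK Fq f ^ (w : ℝ)⁻¹ ≤ (Fintype.card Fq : ℝ) ^ c ↔ f ∈ degLE ⌊c * w⌋ := by
  have hq := one_lt_card_real (Fq := Fq)
  have hw' : (0 : ℝ) < w := Nat.cast_pos.mpr hw
  rcases eq_or_ne f 0 with rfl | hf
  · rw [absK_zero, Real.zero_rpow (inv_ne_zero hw'.ne')]
    exact iff_of_true (by positivity) (zero_mem_degLE _)
  · rw [absK_eq_zpow hf, ← Real.rpow_intCast, ← Real.rpow_mul (by positivity),
      Real.rpow_le_rpow_left_iff hq, ← div_eq_mul_inv, div_le_iff₀ hw', ← Int.le_floor,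
      mem_degLE_iff_neg_order_le hf]

lemma absK_rpow_lt_iff {f : KK Fq} {w : ℕ} (hw : 0 < w) (c : ℝ) :
    absK Fq f ^ (w : ℝ)⁻¹ < (Fintype.card Fq : ℝ) ^ c ↔ f ∈ degLE (⌈c * w⌉ - 1) := by
  have hq := one_lt_card_real (Fq := Fq)
  have hw' : (0 : ℝ) < w := Nat.cast_pos.mpr hw
  rcases eq_or_ne f 0 with rfl | hf
  · rw [absK_zero, Real.zero_rpow (inv_ne_zero hw'.ne')]
    exact iff_of_true (by positivity) (zero_mem_degLE _)
  · rw [absK_eq_zpow hf, ← Real.rpow_intCast, ← Real.rpow_mul (by positivity),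
      Real.rpow_lt_rpow_left_iff hq, ← div_eq_mul_inv, div_lt_iff₀ hw', ← Int.lt_ceil,
      mem_degLE_iff_neg_order_le hf]
    omega

variable {k : ℕ} {w : Fin k → ℕ}

lemma normWt_le_iff {x : Fin k → KK Fq} {c : ℝ} (hc : 0 ≤ c) :
    normWt Fq w x ≤ c ↔ ∀ i, absK Fq (x i) ^ (w i : ℝ)⁻¹ ≤ c :=
  ⟨fun h i => (le_ciSup (Set.finite_range _).bddAbove i).trans h, fun h => Real.iSup_le h hc⟩

lemma normWt_lt_iff {x : Fin k → KK Fq} {c : ℝ} (hc : 0 < c) :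
    normWt Fq w x < c ↔ ∀ i, absK Fq (x i) ^ (w i : ℝ)⁻¹ < c := by
  refine ⟨fun h i => (le_ciSup (Set.finite_range _).bddAbove i).trans_lt h, fun h => ?_⟩
  rcases isEmpty_or_nonempty (Fin k) with hk | hk
  · rwa [normWt, Real.iSup_of_isEmpty]
  · obtain ⟨i, hi⟩ :=
      exists_eq_ciSup_of_finite (f := fun i => absK Fq (x i) ^ (w i : ℝ)⁻¹)
    rw [normWt, ← hi]
    exact h i

lemma setOf_normWt_le (hw : ∀ i, 0 < w i) (c : ℝ) :
    {x | normWt Fq w x ≤ (Fintype.card Fq : ℝ) ^ c} = univ.pi fun i => degLE ⌊c * w i⌋ := by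
  ext x
  rw [mem_ofPred_eq, normWt_le_iff (by positivity), mem_univ_pi]
  exact forall_congr' fun i => absK_rpow_le_iff (hw i) c

lemma setOf_normWt_lt (hw : ∀ i, 0 < w i) (c : ℝ) :
    {x | normWt Fq w x < (Fintype.card Fq : ℝ) ^ c} =
      univ.pi fun i => degLE (⌈c * w i⌉ - 1) := by
  ext x
  rw [mem_ofPred_eq, normWt_lt_iff (by positivity), mem_univ_pi]
  exact forall_congr' fun i => absK_rpow_lt_iff (hw i) c

lemma exists_rat_normWt_eq (hw : ∀ i, 0 < w i) {x : Fin k → KK Fq}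
    (hx : normWt Fq w x ≠ 0) :
    ∃ c : ℚ, normWt Fq w x = (Fintype.card Fq : ℝ) ^ (c : ℝ) := by
  rcases isEmpty_or_nonempty (Fin k) with hk | hk
  · exact absurd (Real.iSup_of_isEmpty _) hx
  obtain ⟨i, hi⟩ := exists_eq_ciSup_of_finite (f := fun i => absK Fq (x i) ^ (w i : ℝ)⁻¹)
  have hw' : (0 : ℝ) < w i := Nat.cast_pos.mpr (hw i)
  have hxi : x i ≠ 0 := by
    rintro hxi
    rw [normWt, ← hi, hxi, absK_zero, Real.zero_rpow (inv_ne_zero hw'.ne')] at hx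
    exact hx rfl
  refine ⟨-(x i).order / w i, ?_⟩
  rw [normWt, ← hi, absK_eq_zpow hxi, ← Real.rpow_intCast, ← Real.rpow_mul (by positivity)]
  push_cast
  ring_nf

end WeightedNorm

section LevelSetMeasure

variable {Fq : Type} [Field Fq] [Fintype Fq] (lam : Measure (KK Fq)) [lam.IsAddLeftInvariant]
  [SigmaFinite lam] {k : ℕ} {w : Fin k → ℕ}

lemma setOf_normWt_eq (c : ℝ) :
    {x | normWt Fq w x = (Fintype.card Fq : ℝ) ^ c} =
      {x | normWt Fq w x ≤ (Fintype.card Fq : ℝ) ^ c} \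
        {x | normWt Fq w x < (Fintype.card Fq : ℝ) ^ c} := by
  ext x
  exact eq_iff_le_not_lt

lemma measurableSet_setOf_normWt_lt (hw : ∀ i, 0 < w i) (c : ℝ) :
    MeasurableSet {x | normWt Fq w x < (Fintype.card Fq : ℝ) ^ c} := by
  rw [setOf_normWt_lt hw]
  exact .univ_pi fun _ => measurableSet_degLE _

lemma measurableSet_setOf_normWt_eq (hw : ∀ i, 0 < w i) (c : ℝ) :
    MeasurableSet {x | normWt Fq w x = (Fintype.card Fq : ℝ) ^ c} := by
  rw [setOf_normWt_eq, setOf_normWt_le hw]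
  exact (MeasurableSet.univ_pi fun _ => measurableSet_degLE _).diff
    (measurableSet_setOf_normWt_lt hw c)

lemma measure_setOf_normWt_le_ne_top (hlam : lam (Oring Fq) = 1) (hw : ∀ i, 0 < w i)
    (c : ℝ) :
    Measure.pi (fun _ : Fin k => lam)
      {x | normWt Fq w x ≤ (Fintype.card Fq : ℝ) ^ c} ≠ ∞ := by
  rw [setOf_normWt_le hw, measure_pi_degLE lam hlam]
  exact ENNReal.coe_ne_top

lemma measureReal_setOf_normWt_le (hlam : lam (Oring Fq) = 1) (hw : ∀ i, 0 < w i) (c : ℚ) :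
    (Measure.pi fun _ : Fin k => lam).real
        {x | normWt Fq w x ≤ (Fintype.card Fq : ℝ) ^ (c : ℝ)}
      = (Fintype.card Fq : ℝ) ^ ∑ i, ⌊c * w i⌋ := by
  rw [setOf_normWt_le hw, measureReal_def, measure_pi_degLE lam hlam, ENNReal.coe_toReal,
    NNReal.coe_zpow, NNReal.coe_natCast]
  simp [← Rat.floor_cast (α := ℝ)]

lemma measureReal_setOf_normWt_lt (hlam : lam (Oring Fq) = 1) (hw : ∀ i, 0 < w i) (c : ℚ) :
    (Measure.pi fun _ : Fin k => lam).real
        {x | normWt Fq w x < (Fintype.card Fq : ℝ) ^ (c : ℝ)}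
      = (Fintype.card Fq : ℝ) ^ (∑ i, ⌈c * w i⌉ - k) := by
  rw [setOf_normWt_lt hw, measureReal_def, measure_pi_degLE lam hlam, ENNReal.coe_toReal,
    NNReal.coe_zpow, NNReal.coe_natCast, Finset.sum_sub_distrib]
  simp [← Rat.ceil_cast (α := ℝ)]

lemma measureReal_setOf_normWt_eq (hlam : lam (Oring Fq) = 1) (hw : ∀ i, 0 < w i) (c : ℚ) :
    (Measure.pi fun _ : Fin k => lam).real
        {x | normWt Fq w x = (Fintype.card Fq : ℝ) ^ (c : ℝ)}
      = (Fintype.card Fq : ℝ) ^ ∑ i, ⌊c * w i⌋ -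
          (Fintype.card Fq : ℝ) ^ (∑ i, ⌈c * w i⌉ - k) := by
  rw [setOf_normWt_eq, measureReal_sdiff (ofPred_subset_ofPred.mpr fun _ => le_of_lt)
    (measurableSet_setOf_normWt_lt hw _) (measure_setOf_normWt_le_ne_top lam hlam hw _),
    measureReal_setOf_normWt_le lam hlam hw, measureReal_setOf_normWt_lt lam hlam hw]

end LevelSetMeasure

section Decomposition

variable {Fq : Type} [Field Fq] [Fintype Fq] {m n : ℕ} {a : Fin (m + n) → ℕ}

variable (Fq a) in
def ELevel (R k : ℚ) : Set ((Fin m → KK Fq) × (Fin n → KK Fq)) :=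
  {x | normAlpha Fq a x < (Fintype.card Fq : ℝ) ^ ((R - k : ℚ) : ℝ)} ×ˢ
    {y | normBeta Fq a y = (Fintype.card Fq : ℝ) ^ (k : ℝ)}

lemma ESet_eq_iUnion_ELevel (ha : ∀ i, 0 < a i) (T R : ℚ) :
    ESet Fq a T R = ⋃ k : {k : ℚ // 0 ≤ k ∧ k ≤ T}, ELevel Fq a R k := by
  have hq := one_lt_card_real (Fq := Fq)
  have hsub : ∀ {x y : ℝ} (k : ℚ), y = (Fintype.card Fq : ℝ) ^ (k : ℝ) →
      (x < (Fintype.card Fq : ℝ) ^ (R : ℝ) / y ↔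
        x < (Fintype.card Fq : ℝ) ^ ((R - k : ℚ) : ℝ)) := by
    rintro x y k rfl
    rw [← Real.rpow_sub (by positivity), Rat.cast_sub]
  ext ⟨x, y⟩
  simp only [ESet, ELevel, mem_ofPred_eq, mem_iUnion, mem_prod, Subtype.exists, exists_prop]
  constructor
  · rintro ⟨hx, h1, hT⟩
    obtain ⟨k, hk⟩ := exists_rat_normWt_eq (fun j => ha (Fin.natAdd m j))
      (show normBeta Fq a y ≠ 0 by linarith)
    rw [← normBeta] at hk
    refine ⟨k, ⟨?_, ?_⟩, (hsub k hk).mp hx, hk⟩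
    · rwa [hk, ← Real.rpow_zero (Fintype.card Fq : ℝ), Real.rpow_le_rpow_left_iff hq,
        Rat.cast_nonneg] at h1
    · rwa [hk, Real.rpow_le_rpow_left_iff hq, Rat.cast_le] at hT
  · rintro ⟨k, ⟨hk0, hkT⟩, hx, hk⟩
    refine ⟨(hsub k hk).mpr hx, ?_, ?_⟩
    · rwa [hk, ← Real.rpow_zero (Fintype.card Fq : ℝ), Real.rpow_le_rpow_left_iff hq,
        Rat.cast_nonneg]
    · rwa [hk, Real.rpow_le_rpow_left_iff hq, Rat.cast_le]

lemma pairwise_disjoint_ELevel (R : ℚ) : Pairwise (Function.onFun Disjoint (ELevel Fq a R)) := by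
  have hq := one_lt_card_real (Fq := Fq)
  refine fun k k' hne => disjoint_left.mpr fun p hp hp' => hne ?_
  exact_mod_cast (Real.rpow_right_inj (by positivity) hq.ne').mp (hp.2.symm.trans hp'.2)

lemma measurableSet_ELevel (ha : ∀ i, 0 < a i) (R k : ℚ) : MeasurableSet (ELevel Fq a R k) :=
  (measurableSet_setOf_normWt_lt (fun _ => ha _) _).prod
    (measurableSet_setOf_normWt_eq (fun _ => ha _) _)

variable (lam : Measure (KK Fq)) [lam.IsAddLeftInvariant] [SigmaFinite lam]

lemma measure_ELevel_ne_top (hlam : lam (Oring Fq) = 1) (ha : ∀ i, 0 < a i) (R k : ℚ) :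
    ((lamVec Fq m lam).prod (lamVec Fq n lam)) (ELevel Fq a R k) ≠ ∞ := by
  rw [lamVec, lamVec, ELevel, Measure.prod_prod]
  refine ENNReal.mul_ne_top ?_ ?_
  · exact measure_ne_top_of_subset (ofPred_subset_ofPred.mpr fun _ => le_of_lt)
      (measure_setOf_normWt_le_ne_top lam hlam (fun _ => ha _) _)
  · exact measure_ne_top_of_subset (ofPred_subset_ofPred.mpr fun _ => le_of_eq)
      (measure_setOf_normWt_le_ne_top lam hlam (fun _ => ha _) _)

lemma measureReal_ELevel (hlam : lam (Oring Fq) = 1) (ha : ∀ i, 0 < a i) (R k : ℚ) :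
    ((lamVec Fq m lam).prod (lamVec Fq n lam)).real (ELevel Fq a R k) =
      (Fintype.card Fq : ℝ) ^ ((∑ i, ⌈(R - k) * (a (Fin.castAdd n i) : ℚ)⌉) - m) *
        ((Fintype.card Fq : ℝ) ^ (∑ j, ⌊k * (a (Fin.natAdd m j) : ℚ)⌋) -
          (Fintype.card Fq : ℝ) ^ ((∑ j, ⌈k * (a (Fin.natAdd m j) : ℚ)⌉) - n)) := by
  simp only [lamVec, ELevel, measureReal_prod_prod, normAlpha, normBeta]
  rw [measureReal_setOf_normWt_lt lam hlam (fun _ => ha _),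
    measureReal_setOf_normWt_eq lam hlam (fun _ => ha _)]

end Decomposition

theorem measure_ESet_formula_general
    (Fq : Type) [Field Fq] [Fintype Fq] (m n : ℕ)
    (a : Fin (m + n) → ℕ) (ha : ∀ i, 0 < a i)
    (lam : Measure (KK Fq)) [SigmaFinite lam] [Measure.IsAddHaarMeasure lam]
    (hlam : lam (Oring Fq) = 1)
    (T R : ℕ) :
    (((lamVec Fq m lam).prod (lamVec Fq n lam)) (ESet Fq a (T : ℝ) (R : ℝ))).toReal
      = ∑' k : {k : ℚ // 0 ≤ k ∧ k ≤ (T : ℚ)},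
          (Fintype.card Fq : ℝ) ^
              ((∑ i : Fin m, ⌈((R : ℚ) - (k : ℚ)) * (a (Fin.castAdd n i) : ℚ)⌉) - (m : ℤ)) *
            ((Fintype.card Fq : ℝ) ^ (∑ j : Fin n, ⌊(k : ℚ) * (a (Fin.natAdd m j) : ℚ)⌋) -
              (Fintype.card Fq : ℝ) ^
                ((∑ j : Fin n, ⌈(k : ℚ) * (a (Fin.natAdd m j) : ℚ)⌉) - (n : ℤ))) := by
  have hE := ESet_eq_iUnion_ELevel (Fq := Fq) ha T R
  rw [Rat.cast_natCast, Rat.cast_natCast] at hE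
  rw [hE, measure_iUnion ((pairwise_disjoint_ELevel R).comp_of_injective Subtype.val_injective)
      fun k => measurableSet_ELevel ha R k,
    ENNReal.tsum_toReal_eq fun _ => measure_ELevel_ne_top lam hlam ha R _]
  exact tsum_congr fun k => measureReal_ELevel lam hlam ha R k

/-- the formula for `Ψ_R(T) = λ^{m+n}(E_{T,R})`: for positive integers
`T` and `R`, `λ^{m+n}(E_{T,R})` equals the sum over all rationals `k ∈ [0,T]` of
`q^{⌈(R−k)a₁⌉+⋯+⌈(R−k)a_m⌉−m}·(q^{⌊ka_{m+1}⌋+⋯+⌊ka_{m+n}⌋} − q^{⌈ka_{m+1}⌉+⋯+⌈ka_{m+n}⌉−n})`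
(only finitely many terms are nonzero). -/
theorem measure_ESet_formula
    (Fq : Type) [Field Fq] [Fintype Fq] (m n : ℕ) (hm : 0 < m) (hn : 0 < n)
    (a : Fin (m + n) → ℕ) (ha : ∀ i, 0 < a i)
    (hsum : ∑ i : Fin m, a (Fin.castAdd n i) = ∑ j : Fin n, a (Fin.natAdd m j))
    (lam : Measure (KK Fq)) [SigmaFinite lam] [Measure.IsAddHaarMeasure lam]
    (hlam : lam (Oring Fq) = 1)
    (T R : ℕ) (hT : 0 < T) (hR : 0 < R) :
    (((lamVec Fq m lam).prod (lamVec Fq n lam)) (ESet Fq a (T : ℝ) (R : ℝ))).toReal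
      = ∑' k : {k : ℚ // 0 ≤ k ∧ k ≤ (T : ℚ)},
          (Fintype.card Fq : ℝ) ^
              ((∑ i : Fin m, ⌈((R : ℚ) - (k : ℚ)) * (a (Fin.castAdd n i) : ℚ)⌉) - (m : ℤ)) *
            ((Fintype.card Fq : ℝ) ^ (∑ j : Fin n, ⌊(k : ℚ) * (a (Fin.natAdd m j) : ℚ)⌋) -
              (Fintype.card Fq : ℝ) ^
                ((∑ j : Fin n, ⌈(k : ℚ) * (a (Fin.natAdd m j) : ℚ)⌉) - (n : ℤ))) :=
  measure_ESet_formula_general Fq m n a ha lam hlam T R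

end PaperKL
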